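/- arXiv:2006.02918 — 6 statements merged into one kernel-verified Lean document; each statement's English description precedes it below -/
import Mathlib

section
/- For every nonnegative integer n and δ ∈ {0,1}: ∑_{k=0}^{n} [(4n+2δ−k+1)/(2n+δ+k+1)] · (−n)_k(1/2−δ−n)_k/[(1)_k(−4n−2δ)_k] · (4/3)^k = (3/4)^{2n+δ} · Γ(1/2)Γ(2n+1+δ)/Γ(2n+δ+1/2), where (x)_k denotes the rising factorial. -/
/-!
Put `N = 2n + δ`. The duplication formula `(x/2)_k ((x+1)/2)_k 4^k = (x)_{2k}` merges the two
Pochhammer symbols of the numerator into `(-N)_{2k}`, so both parities become a single sum in `N`.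
Scaled by `(2N)!/N!²`, its `k`-th term is `F(N,k) = (-1/3)^k C(N+k,k) C(2N+1-k,N+k+1)`, while
Legendre's duplication formula for `Γ` turns the right-hand side into `3^N`. Finally
`∑ₖ F(N,k) = 3^N` by Zeilberger's method: `F(N+1,k) - 3 F(N,k) = G(N,k+1) - G(N,k)` for a
companion `G` of the same shape, so the recurrence telescopes in `k`.
-/

open Nat Finset Real

theorem ascPochhammer_eval_half_mul_eval_add_one_half {K : Type*} [Field K] [NeZero (2 : K)]
    (x : K) (k : ℕ) :
    (ascPochhammer K k).eval (x / 2) * (ascPochhammer K k).eval ((x + 1) / 2) * 4 ^ k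
      = (ascPochhammer K (2 * k)).eval x := by
  induction k with
  | zero => simp
  | succ k ih =>
    rw [show 2 * (k + 1) = 2 * k + 1 + 1 by ring]
    simp only [ascPochhammer_succ_eval, ← ih]
    push_cast
    field_simp
    ring

lemma Nat.cast_choose_eq_of_eq_add {K : Type*} [DivisionSemiring K] [CharZero K] {n a b : ℕ}
    (h : n = a + b) : (n.choose a : K) = n ! / (a ! * b !) := by
  subst h
  exact Nat.cast_add_choose K

lemma Nat.cast_descFactorial_eq_of_eq_add {K : Type*} [DivisionSemiring K] [CharZero K]
    {n a b : ℕ} (h : n = a + b) : (n.descFactorial b : K) = n ! / a ! := by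
  rw [eq_div_iff (Nat.cast_ne_zero.mpr a.factorial_ne_zero), ← Nat.cast_mul, mul_comm,
    ← Nat.factorial_mul_descFactorial (show b ≤ n by omega), show n - b = a by omega]

lemma Real.Gamma_nat_add_half_eq_factorial (N : ℕ) :
    Gamma (N + 1 / 2) = (2 * N)! * √π / (4 ^ N * N !) := by
  have h := Gamma_mul_Gamma_add_half (N + 1 / 2)
  rw [show (N : ℝ) + 1 / 2 + 1 / 2 = N + 1 by ring, Gamma_nat_eq_factorial,
    show 2 * ((N : ℝ) + 1 / 2) = (2 * N : ℕ) + 1 by push_cast; ring, Gamma_nat_eq_factorial,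
    show (1 : ℝ) - ((2 * N : ℕ) + 1) = -(2 * N : ℕ) by ring, rpow_neg zero_le_two,
    rpow_natCast, pow_mul] at h
  rw [eq_div_iff (by positivity), ← mul_assoc, mul_comm _ (4 ^ N), mul_assoc, h]
  norm_num
  field_simp

/- The two binomials that vanish at the boundary (`b = 0`, resp. `k = 0`) are first rewritten
through non-vanishing ones, so that a single factorial computation covers all `k` and `b`. -/
lemma choose_wz_identity_of_two_mul_le (k b : ℕ) :
    (3 * k + b + 1).choose k * (3 * k + 2 * b + 3).choose (3 * k + b + 2) =
      3 * (3 * k + b).choose k * (3 * k + 2 * b + 1).choose (3 * k + b + 1)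
      + (3 * k + b + 1).choose (2 * k + b + 1) * (3 * k + 2 * b + 1).choose (3 * k + b + 2)
      + 3 * (3 * k + b).choose (2 * k + b + 1) * (3 * k + 2 * b + 2).choose (3 * k + b + 1) := by
  have hb : ((3 * k + 2 * b + 1).choose (3 * k + b + 2) : ℝ) =
      (3 * k + 2 * b + 1).choose (3 * k + b + 1) * b / (3 * k + b + 2) := by
    have := Nat.choose_succ_right_eq (3 * k + 2 * b + 1) (3 * k + b + 1)
    rw [show 3 * k + 2 * b + 1 - (3 * k + b + 1) = b by omega] at this
    rw [eq_div_iff (by positivity)]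
    exact_mod_cast this
  have hk : ((3 * k + b).choose (2 * k + b + 1) : ℝ) =
      (3 * k + b).choose (2 * k + b) * k / (2 * k + b + 1) := by
    have := Nat.choose_succ_right_eq (3 * k + b) (2 * k + b)
    rw [show 3 * k + b - (2 * k + b) = k by omega] at this
    rw [eq_div_iff (by positivity)]
    exact_mod_cast this
  rify
  rw [hb, hk,
    Nat.cast_choose_eq_of_eq_add (b := 2 * k + b + 1) (by ring),
    Nat.cast_choose_eq_of_eq_add (b := b + 1) (by ring),
    Nat.cast_choose_eq_of_eq_add (b := 2 * k + b) (by ring),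
    Nat.cast_choose_eq_of_eq_add (b := b) (by ring),
    Nat.cast_choose_eq_of_eq_add (b := k) (by ring),
    Nat.cast_choose_eq_of_eq_add (b := k) (by ring),
    Nat.cast_choose_eq_of_eq_add (b := b + 1) (by ring)]
  simp only [Nat.factorial_succ]
  push_cast
  field_simp
  ring

lemma choose_wz_identity_of_eq_two_mul (l : ℕ) :
    (3 * l + 3).choose (l + 1) * (3 * l + 4).choose (3 * l + 4) =
      3 * (3 * l + 2).choose (l + 1) * (3 * l + 2).choose (3 * l + 3)
      + (3 * l + 3).choose (2 * l + 2) * (3 * l + 2).choose (3 * l + 4)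
      + 3 * (3 * l + 2).choose (2 * l + 2) * (3 * l + 3).choose (3 * l + 3) := by
  have h := Nat.add_one_mul_choose_eq (3 * l + 2) l
  simp only [Nat.choose_self, Nat.choose_eq_zero_of_lt (show 3 * l + 2 < 3 * l + 3 by omega),
    Nat.choose_eq_zero_of_lt (show 3 * l + 2 < 3 * l + 4 by omega),
    Nat.choose_symm_of_eq_add (show 3 * l + 2 = 2 * l + 2 + l by ring)]
  refine Nat.eq_of_mul_eq_mul_right l.succ_pos ?_
  linarith

lemma choose_wz_identity (N k : ℕ) :
    (N + k + 1).choose k * (2 * N + 3 - k).choose (N + k + 2) =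
      3 * (N + k).choose k * (2 * N + 1 - k).choose (N + k + 1)
      + (N + k + 1).choose (N + 1) * (2 * N + 1 - k).choose (N + k + 2)
      + 3 * (N + k).choose (N + 1) * (2 * N + 2 - k).choose (N + k + 1) := by
  rcases lt_trichotomy (N + 1) (2 * k) with h | h | h
  · simp [Nat.choose_eq_zero_of_lt (show 2 * N + 3 - k < N + k + 2 by omega),
      Nat.choose_eq_zero_of_lt (show 2 * N + 1 - k < N + k + 1 by omega),
      Nat.choose_eq_zero_of_lt (show 2 * N + 1 - k < N + k + 2 by omega),
      Nat.choose_eq_zero_of_lt (show 2 * N + 2 - k < N + k + 1 by omega)]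
  · obtain ⟨l, rfl⟩ : ∃ l, k = l + 1 := ⟨k - 1, by omega⟩
    obtain rfl : N = 2 * l + 1 := by omega
    have := choose_wz_identity_of_eq_two_mul l
    rw [show 2 * (2 * l + 1) + 3 - (l + 1) = 3 * l + 4 by omega,
      show 2 * (2 * l + 1) + 1 - (l + 1) = 3 * l + 2 by omega,
      show 2 * (2 * l + 1) + 2 - (l + 1) = 3 * l + 3 by omega]
    ring_nf at this ⊢
    exact this
  · obtain ⟨b, rfl⟩ : ∃ b, N = 2 * k + b := ⟨N - 2 * k, by omega⟩
    have := choose_wz_identity_of_two_mul_le k b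
    rw [show 2 * (2 * k + b) + 3 - k = 3 * k + 2 * b + 3 by omega,
      show 2 * (2 * k + b) + 1 - k = 3 * k + 2 * b + 1 by omega,
      show 2 * (2 * k + b) + 2 - k = 3 * k + 2 * b + 2 by omega]
    ring_nf at this ⊢
    exact this

noncomputable def wzF (N k : ℕ) : ℝ :=
  (-1 / 3) ^ k * (N + k).choose k * (2 * N + 1 - k).choose (N + k + 1)

noncomputable def wzG (N k : ℕ) : ℝ :=
  -3 * (-1 / 3) ^ k * (N + k).choose (N + 1) * (2 * N + 2 - k).choose (N + k + 1)

lemma wzF_eq_zero {N k : ℕ} (h : N < 2 * k) : wzF N k = 0 := by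
  simp [wzF, Nat.choose_eq_zero_of_lt (show 2 * N + 1 - k < N + k + 1 by omega)]

lemma wzG_eq_zero {N k : ℕ} (h : N + 1 < 2 * k) : wzG N k = 0 := by
  simp [wzG, Nat.choose_eq_zero_of_lt (show 2 * N + 2 - k < N + k + 1 by omega)]

lemma wzG_zero (N : ℕ) : wzG N 0 = 0 := by
  simp [wzG]

lemma wzF_succ_sub (N k : ℕ) :
    wzF (N + 1) k - 3 * wzF N k = wzG N (k + 1) - wzG N k := by
  have h : ((N + k + 1).choose k * (2 * N + 3 - k).choose (N + k + 2) : ℝ) =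
      3 * (N + k).choose k * (2 * N + 1 - k).choose (N + k + 1)
      + (N + k + 1).choose (N + 1) * (2 * N + 1 - k).choose (N + k + 2)
      + 3 * (N + k).choose (N + 1) * (2 * N + 2 - k).choose (N + k + 1) := by
    exact_mod_cast choose_wz_identity N k
  simp only [wzF, wzG]
  rw [show 2 * (N + 1) + 1 - k = 2 * N + 3 - k by omega,
    show 2 * N + 2 - (k + 1) = 2 * N + 1 - k by omega,
    show N + 1 + k = N + k + 1 by ring, show N + (k + 1) = N + k + 1 by ring]
  linear_combination (-1 / 3 : ℝ) ^ k * h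

theorem sum_range_wzF {N M : ℕ} (h : N < 2 * M) : ∑ k ∈ range M, wzF N k = 3 ^ N := by
  induction N with
  | zero =>
    rw [sum_eq_single_of_mem 0 (mem_range.mpr (by omega)) fun k _ hk => wzF_eq_zero (by omega)]
    simp [wzF]
  | succ N ih =>
    calc ∑ k ∈ range M, wzF (N + 1) k
        = ∑ k ∈ range M, (3 * wzF N k + (wzG N (k + 1) - wzG N k)) :=
          sum_congr rfl fun k _ => by linarith [wzF_succ_sub N k]
      _ = 3 ^ (N + 1) := by
          rw [sum_add_distrib, ← mul_sum, ih (by omega), sum_range_sub, wzG_eq_zero (by omega),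
            wzG_zero]
          ring

lemma pochhammer_term_eq_mul_wzF (N k : ℕ) :
    ((2 * N : ℝ) - k + 1) / (N + k + 1) * (ascPochhammer ℝ (2 * k)).eval (-(N : ℝ)) /
        (k ! * (ascPochhammer ℝ k).eval (-(2 * N : ℝ))) * (1 / 3) ^ k
      = (N ! : ℝ) ^ 2 / (2 * N)! * wzF N k := by
  rw [show (2 * N : ℝ) = (2 * N : ℕ) by push_cast; ring,
    ascPochhammer_eval_neg_eq_descPochhammer, ascPochhammer_eval_neg_eq_descPochhammer,
    descPochhammer_eval_eq_descFactorial, descPochhammer_eval_eq_descFactorial]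
  obtain h | h := lt_or_ge N (2 * k)
  · simp [Nat.descFactorial_eq_zero_iff_lt.mpr h, wzF_eq_zero h]
  obtain ⟨j, rfl⟩ : ∃ j, N = 2 * k + j := ⟨N - 2 * k, by omega⟩
  rw [Nat.cast_descFactorial_eq_of_eq_add (a := j) (by ring),
    Nat.cast_descFactorial_eq_of_eq_add (a := 3 * k + 2 * j) (by ring), wzF,
    show (-1 / 3 : ℝ) = -1 * (1 / 3) by ring, mul_pow,
    show 2 * k + j + k = 3 * k + j by ring,
    show 2 * (2 * k + j) + 1 - k = 3 * k + 2 * j + 1 by omega,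
    Nat.cast_choose_eq_of_eq_add (b := 2 * k + j) (by ring),
    Nat.cast_choose_eq_of_eq_add (b := j) (by ring)]
  simp only [Nat.factorial_succ]
  push_cast
  field_simp
  ring

theorem strange_identity_48 (n δ : ℕ) (hδ : δ = 0 ∨ δ = 1) :
    ∑ k ∈ Finset.range (n + 1),
      (((4 * n + 2 * δ : ℝ) - k + 1) / ((2 * n + δ : ℝ) + k + 1)) *
        ((ascPochhammer ℝ k).eval (-(n : ℝ)) *
          (ascPochhammer ℝ k).eval (1 / 2 - (δ : ℝ) - (n : ℝ))) /
        ((ascPochhammer ℝ k).eval 1 *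
          (ascPochhammer ℝ k).eval (-(4 * n : ℝ) - 2 * δ)) * (4 / 3 : ℝ) ^ k
      = (3 / 4 : ℝ) ^ (2 * n + δ) *
          (Real.Gamma (1 / 2) * Real.Gamma (2 * n + 1 + δ) /
            Real.Gamma (2 * n + δ + 1 / 2)) := by
  set N := 2 * n + δ with hN
  have hprod (k : ℕ) : (ascPochhammer ℝ k).eval (-(n : ℝ)) *
      (ascPochhammer ℝ k).eval (1 / 2 - (δ : ℝ) - n) =
        (ascPochhammer ℝ (2 * k)).eval (-(N : ℝ)) / 4 ^ k := by
    rw [eq_div_iff (by positivity), ← ascPochhammer_eval_half_mul_eval_add_one_half]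
    rcases hδ with rfl | rfl
    · congr 3 <;> push_cast [hN] <;> ring
    · rw [mul_comm ((ascPochhammer ℝ k).eval _)]
      congr 3 <;> push_cast [hN] <;> ring
  calc _ = ∑ k ∈ range (n + 1), (N ! : ℝ) ^ 2 / (2 * N)! * wzF N k := by
        refine sum_congr rfl fun k _ => ?_
        rw [hprod, ascPochhammer_eval_one, ← pochhammer_term_eq_mul_wzF,
          show -(4 * n : ℝ) - 2 * δ = -(2 * N : ℝ) by push_cast [hN]; ring,
          show (4 / 3 : ℝ) ^ k = 4 ^ k * (1 / 3) ^ k by rw [← mul_pow]; norm_num]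
        push_cast [hN]
        field_simp
        ring
    _ = (N ! : ℝ) ^ 2 / (2 * N)! * 3 ^ N := by rw [← mul_sum, sum_range_wzF (by omega)]
    _ = _ := by
        rw [show (2 * n + 1 + δ : ℝ) = N + 1 by push_cast [hN]; ring,
          show (2 * n + δ + 1 / 2 : ℝ) = N + 1 / 2 by push_cast [hN]; ring, Gamma_one_half_eq,
          Gamma_nat_eq_factorial, Gamma_nat_add_half_eq_factorial, div_pow]
        field_simp
end

section
/- For every nonnegative integer n: ∑_{k=0}^{n} (−n)_k(−1/3−n)_k/[(1)_k(−3n−1)_k] · (9/8)^k = (5/6)_n / (2^n · (2/3)_n), where (x)_k is the rising factorial. -/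
/-!
The sum is a terminating hypergeometric sum, and creative telescoping (Zeilberger's algorithm)
finds the certificate: with `t n k` the summand,
`(12n+8) t(n+1,k+1) + (6n+3-4k) t(n,k) = (12n+4-4k) t(n,k+1)`.
Summing over `k` telescopes to the first-order recurrence `(12n+8) S(n+1) = (6n+5) S(n)`,
which the right-hand side `(5/6)_n / (2^n (2/3)_n)` visibly satisfies; both sides equal `1` at `n = 0`.
The relation itself is checked by writing `t(n+1,k+1)` and `t(n,k+1)` as rational multiples
of `t(n,k)`.
-/

open Polynomial Finset

theorem ascPochhammer_eval_add {S : Type*} [CommSemiring S] (m n : ℕ) (x : S) :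
    (ascPochhammer S (m + n)).eval x =
      (ascPochhammer S m).eval x * (ascPochhammer S n).eval (x + m) := by
  rw [← ascPochhammer_mul, eval_mul, eval_comp]
  simp

theorem ascPochhammer_succ_eval_left {S : Type*} [CommSemiring S] (n : ℕ) (x : S) :
    (ascPochhammer S (n + 1)).eval x = x * (ascPochhammer S n).eval (x + 1) := by
  rw [add_comm, ascPochhammer_eval_add]
  simp

theorem ascPochhammer_succ_eval_mul_eq_eval_add_three {S : Type*} [CommSemiring S] (n : ℕ)
    (x : S) :
    (ascPochhammer S (n + 1)).eval x * ((x + n + 1) * (x + n + 2)) =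
      x * (x + 1) * (x + 2) * (ascPochhammer S n).eval (x + 3) := by
  calc (ascPochhammer S (n + 1)).eval x * ((x + n + 1) * (x + n + 2))
      = (ascPochhammer S (n + 1 + 1 + 1)).eval x := by
        rw [ascPochhammer_succ_eval (n + 1 + 1), ascPochhammer_succ_eval (n + 1)]
        push_cast
        ring
    _ = (ascPochhammer S (3 + n)).eval x := by rw [show n + 1 + 1 + 1 = 3 + n by omega]
    _ = x * (x + 1) * (x + 2) * (ascPochhammer S n).eval (x + 3) := by
        rw [ascPochhammer_eval_add]
        simp [ascPochhammer_succ_eval]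

noncomputable def term (n k : ℕ) : ℚ :=
  (ascPochhammer ℚ k).eval (-(n : ℚ)) * (ascPochhammer ℚ k).eval (-1 / 3 - (n : ℚ)) /
    ((ascPochhammer ℚ k).eval 1 * (ascPochhammer ℚ k).eval (-(3 * n : ℚ) - 1)) * (9 / 8 : ℚ) ^ k

theorem term_zero_right (n : ℕ) : term n 0 = 1 := by
  simp [term]

theorem term_succ_self (n : ℕ) : term n (n + 1) = 0 := by
  simp [term, ascPochhammer_eval_neg_coe_nat_of_lt (Nat.lt_succ_self n)]

theorem term_succ_right (n k : ℕ) :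
    term n (k + 1) =
      (k - n) * (k - 1 / 3 - n) / ((k + 1) * (k - 3 * n - 1)) * (9 / 8) * term n k := by
  simp only [term, ascPochhammer_succ_eval, div_eq_mul_inv, mul_inv]
  ring

theorem term_succ_succ (n k : ℕ) (hk : k ≤ 3 * n + 1) :
    term (n + 1) (k + 1) =
      -((3 * n + 3 - k) * (3 * n + 2 - k)) / (8 * (k + 1) * (3 * n + 2)) * term n k := by
  have hk' : (k : ℚ) ≤ 3 * n + 1 := by exact_mod_cast hk
  have hnum_n : (ascPochhammer ℚ (k + 1)).eval (-((n + 1 : ℕ) : ℚ)) =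
      -(n + 1) * (ascPochhammer ℚ k).eval (-(n : ℚ)) := by
    rw [ascPochhammer_succ_eval_left]; push_cast; ring_nf
  have hnum_third : (ascPochhammer ℚ (k + 1)).eval (-1 / 3 - ((n + 1 : ℕ) : ℚ)) =
      (-4 / 3 - n) * (ascPochhammer ℚ k).eval (-1 / 3 - (n : ℚ)) := by
    rw [ascPochhammer_succ_eval_left]; push_cast; ring_nf
  have hden : (ascPochhammer ℚ (k + 1)).eval (-(3 * ((n + 1 : ℕ) : ℚ)) - 1) =
      -((3 * n + 4) * (3 * n + 3) * (3 * n + 2)) * (ascPochhammer ℚ k).eval (-(3 * n : ℚ) - 1) /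
        ((3 * n + 3 - k) * (3 * n + 2 - k)) := by
    have h := ascPochhammer_succ_eval_mul_eq_eval_add_three k (-(3 * ((n + 1 : ℕ) : ℚ)) - 1)
    refine eq_div_of_mul_eq (mul_ne_zero ?_ ?_) ?_
    · intro h; linarith
    · intro h; linarith
    push_cast at h ⊢
    ring_nf at h ⊢
    linear_combination h
  simp only [term]
  rw [hnum_n, hnum_third, hden, ascPochhammer_succ_eval (k := (1 : ℚ))]
  field_simp
  ring

theorem term_contiguous (n k : ℕ) (hk : k ≤ 3 * n) :
    (12 * n + 8) * term (n + 1) (k + 1) + (6 * n + 3 - 4 * k) * term n k =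
      (12 * n + 4 - 4 * k) * term n (k + 1) := by
  have hk' : (k : ℚ) ≤ 3 * n := by exact_mod_cast hk
  rw [term_succ_succ n k (by omega), term_succ_right]
  field_simp
  rw [eq_div_iff (by intro h; linarith)]
  ring

theorem sum_term_recurrence (n : ℕ) :
    (12 * n + 8) * ∑ k ∈ range (n + 2), term (n + 1) k =
      (6 * n + 5) * ∑ k ∈ range (n + 1), term n k := by
  set u : ℕ → ℚ := fun k => (6 * n + 3 - 4 * k) * term n k with hu
  have hstep : ∀ k ∈ range (n + 1),
      (12 * n + 8) * term (n + 1) (k + 1) = (6 * n + 5) * term n (k + 1) + (u (k + 1) - u k) := by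
    intro k hk
    have := term_contiguous n k (by rw [mem_range] at hk; omega)
    simp only [hu]
    push_cast
    linarith
  have hshift : ∑ k ∈ range (n + 1), term n (k + 1) = ∑ k ∈ range (n + 1), term n k - 1 := by
    have h := sum_range_succ' (term n) (n + 1)
    rw [sum_range_succ, term_succ_self, term_zero_right] at h
    linarith
  have hu0 : u 0 = 6 * n + 3 := by simp [hu, term_zero_right]
  have hun : u (n + 1) = 0 := by simp [hu, term_succ_self]
  rw [sum_range_succ', mul_add, mul_sum, sum_congr rfl hstep, sum_add_distrib, ← mul_sum,
    sum_range_sub, hshift, hu0, hun, term_zero_right]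
  ring

theorem strange_identity_G (n : ℕ) :
    ∑ k ∈ Finset.range (n + 1),
      (ascPochhammer ℚ k).eval (-(n : ℚ)) * (ascPochhammer ℚ k).eval (-1 / 3 - (n : ℚ)) /
        ((ascPochhammer ℚ k).eval 1 * (ascPochhammer ℚ k).eval (-(3 * n : ℚ) - 1)) *
        (9 / 8 : ℚ) ^ k
      = (ascPochhammer ℚ n).eval (5 / 6) / (2 ^ n * (ascPochhammer ℚ n).eval (2 / 3)) := by
  show ∑ k ∈ range (n + 1), term n k = _
  induction n with
  | zero => simp [term_zero_right]
  | succ n ih =>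
    have hQ : (ascPochhammer ℚ n).eval (2 / 3) ≠ 0 := (ascPochhammer_pos n _ (by norm_num)).ne'
    have hrec := sum_term_recurrence n
    rw [ih] at hrec
    rw [ascPochhammer_succ_eval, ascPochhammer_succ_eval]
    field_simp at hrec ⊢
    linear_combination 3 * hrec
end

section
/- For every nonnegative integer n: ∑_{k=0}^{n} (3n+k+3) · (−n)_k(−1/3−n)_k/[(1)_k(−3n−1)_k] · (9/8)^k = 3 · 2^{1−n} · Γ(2/3)Γ(3/2+n)/[Γ(1/2)Γ(2/3+n)]. -/
/-!
Creative telescoping (Zeilberger). Let `F n k` be the summand, `r n = (6n+9)/(12n+8)` and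
`R n k = (k+3n+7)(6n+3-4k) / (4(3n+2)(3n+k+3))`. Then
`F (n+1) (k+1) - r n * F n (k+1) = R n (k+1) * F n (k+1) - R n k * F n k` and
`F (n+1) 0 - r n * F n 0 = R n 0 * F n 0`: these are rational identities in `n` and `k`, because
`F n (k+1) / F n k` and `F (n+1) (k+1) / F n k` are rational functions. Summed over `k ≤ n+1` they
telescope to `R n (n+1) * F n (n+1) = 0`, since `(-n)_(n+1) = 0`; hence the sum satisfies
`S (n+1) = r n * S n`. By `Γ(x+1) = xΓ(x)` the right-hand side satisfies the same recurrence, and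
both sides equal `3` at `n = 0`.
-/

open Finset Polynomial

theorem ascPochhammer_eval_succ_left {S : Type*} [CommSemiring S] (k : ℕ) (x : S) :
    (ascPochhammer S (k + 1)).eval x = x * (ascPochhammer S k).eval (x + 1) := by
  simp [ascPochhammer_succ_left, eval_comp]

theorem ascPochhammer_eval_mul_eq_eval_add_two {S : Type*} [CommSemiring S] (k : ℕ) (x : S) :
    (ascPochhammer S k).eval x * ((x + k) * (x + k + 1))
      = x * (x + 1) * (ascPochhammer S k).eval (x + 2) := by
  have hright : (ascPochhammer S (k + 2)).eval x
      = (ascPochhammer S k).eval x * ((x + k) * (x + k + 1)) := by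
    rw [ascPochhammer_succ_eval, ascPochhammer_succ_eval]
    push_cast
    ring
  have hleft : (ascPochhammer S (k + 2)).eval x
      = x * (x + 1) * (ascPochhammer S k).eval (x + 2) := by
    rw [ascPochhammer_eval_succ_left, ascPochhammer_eval_succ_left, add_assoc x 1 1,
      one_add_one_eq_two, mul_assoc]
  rw [← hright, hleft]

theorem ascPochhammer_eval_neg_natCast_ne_zero {S : Type*} [CommRing S] [IsDomain S] [CharZero S]
    {k m : ℕ} (h : k ≤ m) : (ascPochhammer S k).eval (-(m : S)) ≠ 0 := by
  rw [ne_eq, ascPochhammer_eval_eq_zero_iff, neg_neg]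
  rintro ⟨j, hj, hjm⟩
  exact absurd (Nat.cast_injective hjm) (by omega)

namespace StrangeIdentityK

noncomputable def term (n k : ℕ) : ℝ :=
  (3 * n + k + 3 : ℝ) *
    ((ascPochhammer ℝ k).eval (-(n : ℝ)) * (ascPochhammer ℝ k).eval (-1 / 3 - (n : ℝ))) /
    ((ascPochhammer ℝ k).eval 1 * (ascPochhammer ℝ k).eval (-(3 * n : ℝ) - 1)) *
    (9 / 8 : ℝ) ^ k

noncomputable def ratio (n : ℕ) : ℝ := (6 * n + 9) / (12 * n + 8)

noncomputable def certificate (n k : ℕ) : ℝ :=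
  (k + 3 * n + 7) * (6 * n + 3 - 4 * k) / (4 * (3 * n + 2) * (3 * n + k + 3))

noncomputable def rhs (n : ℕ) : ℝ :=
  3 * (2 : ℝ) ^ ((1 : ℝ) - n) *
    (Real.Gamma (2 / 3) * Real.Gamma (3 / 2 + n) / (Real.Gamma (1 / 2) * Real.Gamma (2 / 3 + n)))

theorem eval_neg_three_mul_sub_one_ne_zero {n k : ℕ} (hk : k ≤ 3 * n + 1) :
    (ascPochhammer ℝ k).eval (-(3 * n : ℝ) - 1) ≠ 0 := by
  have := ascPochhammer_eval_neg_natCast_ne_zero (S := ℝ) hk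
  push_cast at this
  rwa [neg_add'] at this

theorem term_succ_right (n k : ℕ) (hk : k ≤ 3 * n) :
    term n (k + 1) = (3 * n + k + 4) / (3 * n + k + 3) * ((k - n) * (k - n - 1 / 3))
      / ((k + 1) * (k - 3 * n - 1)) * (9 / 8) * term n k := by
  have hk' : (k : ℝ) ≤ 3 * n := by exact_mod_cast hk
  have hD := eval_neg_three_mul_sub_one_ne_zero (show k ≤ 3 * n + 1 by omega)
  have hC := (ascPochhammer_pos k (1 : ℝ) one_pos).ne'
  have hk₁ : (k : ℝ) - 3 * n - 1 ≠ 0 := by linarith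
  have hk₁' : -(3 * n : ℝ) - 1 + k ≠ 0 := by linarith
  simp only [term, ascPochhammer_succ_eval, pow_succ]
  push_cast
  field_simp
  ring

theorem term_succ_succ (n k : ℕ) (hk : k ≤ 3 * n + 1) :
    term (n + 1) (k + 1) = -(3 * n + k + 7) / (3 * n + k + 3) * ((n + 1) * (n + 4 / 3))
      * ((k - 3 * n - 3) * (k - 3 * n - 2)) / ((k + 1) * (3 * n + 4) * (3 * n + 3) * (3 * n + 2))
      * (9 / 8) * term n k := by
  have hk' : (k : ℝ) ≤ 3 * n + 1 := by exact_mod_cast hk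
  have hD := eval_neg_three_mul_sub_one_ne_zero hk
  have hC := (ascPochhammer_pos k (1 : ℝ) one_pos).ne'
  have hk₃ : (k : ℝ) - 3 * n - 3 ≠ 0 := by linarith
  have hk₂ : (k : ℝ) - 3 * n - 2 ≠ 0 := by linarith
  have hE : (ascPochhammer ℝ k).eval (-(3 * n : ℝ) - 3) = (3 * n + 3) * (3 * n + 2)
      * (ascPochhammer ℝ k).eval (-(3 * n : ℝ) - 1) / ((k - 3 * n - 3) * (k - 3 * n - 2)) := by
    have hshift := ascPochhammer_eval_mul_eq_eval_add_two k (-(3 * n : ℝ) - 3)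
    rw [show -(3 * n : ℝ) - 3 + 2 = -(3 * n) - 1 by ring] at hshift
    rw [eq_div_iff (mul_ne_zero hk₃ hk₂)]
    linear_combination hshift
  have hn : -(3 * ((n : ℝ) + 1)) - 1 ≠ 0 := by linarith
  unfold term
  push_cast
  rw [ascPochhammer_eval_succ_left k (-((n : ℝ) + 1)),
    ascPochhammer_eval_succ_left k (-1 / 3 - ((n : ℝ) + 1)), ascPochhammer_succ_eval k (1 : ℝ),
    ascPochhammer_eval_succ_left k (-(3 * ((n : ℝ) + 1)) - 1),
    show -(3 * ((n : ℝ) + 1)) - 1 + 1 = -(3 * n) - 3 by ring,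
    show -((n : ℝ) + 1) + 1 = -n by ring,
    show -1 / 3 - ((n : ℝ) + 1) + 1 = -1 / 3 - n by ring, hE, pow_succ]
  field_simp
  ring

theorem creative_telescoping_succ (n k : ℕ) (hk : k ≤ 3 * n) :
    term (n + 1) (k + 1) - ratio n * term n (k + 1)
      = certificate n (k + 1) * term n (k + 1) - certificate n k * term n k := by
  have hk' : (k : ℝ) ≤ 3 * n := by exact_mod_cast hk
  have hk₁ : (k : ℝ) - 3 * n - 1 ≠ 0 := by linarith
  rw [term_succ_succ n k (by omega), term_succ_right n k hk, ratio, certificate, certificate]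
  push_cast
  field_simp
  ring

theorem creative_telescoping_zero (n : ℕ) :
    term (n + 1) 0 - ratio n * term n 0 = certificate n 0 * term n 0 := by
  simp only [term, ratio, certificate, ascPochhammer_zero, eval_one]
  push_cast
  field_simp
  ring

theorem term_self_succ (n : ℕ) : term n (n + 1) = 0 := by
  simp [term, ascPochhammer_eval_neg_coe_nat_of_lt (Nat.lt_succ_self n)]

theorem sum_term_succ (n : ℕ) :
    ∑ k ∈ range (n + 2), term (n + 1) k = ratio n * ∑ k ∈ range (n + 1), term n k := by
  set G : ℕ → ℝ := fun k ↦ certificate n k * term n k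
  have hsum : ∑ k ∈ range (n + 2), (term (n + 1) k - ratio n * term n k) = G (n + 1) := by
    rw [sum_range_succ', creative_telescoping_zero,
      sum_congr rfl fun k hk ↦ creative_telescoping_succ n k (by simp at hk; omega),
      sum_range_sub G]
    ring
  have hG : G (n + 1) = 0 := by simp [G, term_self_succ]
  rwa [sum_sub_distrib, ← mul_sum, sum_range_succ (term n) (n + 1), term_self_succ, add_zero, hG,
    sub_eq_zero] at hsum

theorem rhs_succ (n : ℕ) : rhs (n + 1) = ratio n * rhs n := by
  have hΓ₁ : Real.Gamma (3 / 2 + (n + 1 : ℕ)) = (3 / 2 + n) * Real.Gamma (3 / 2 + n) := by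
    rw [Nat.cast_succ, ← add_assoc, Real.Gamma_add_one (by positivity)]
  have hΓ₂ : Real.Gamma (2 / 3 + (n + 1 : ℕ)) = (2 / 3 + n) * Real.Gamma (2 / 3 + n) := by
    rw [Nat.cast_succ, ← add_assoc, Real.Gamma_add_one (by positivity)]
  have hpow : (2 : ℝ) ^ ((1 : ℝ) - (n + 1 : ℕ)) = (2 : ℝ) ^ ((1 : ℝ) - n) / 2 := by
    rw [Nat.cast_succ, ← sub_sub, Real.rpow_sub two_pos, Real.rpow_one]
  rw [rhs, rhs, ratio, hΓ₁, hΓ₂, hpow]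
  field_simp
  ring

theorem rhs_zero : rhs 0 = 3 := by
  have hΓ : Real.Gamma (3 / 2) = 1 / 2 * Real.Gamma (1 / 2) := by
    rw [show (3 / 2 : ℝ) = 1 / 2 + 1 by norm_num, Real.Gamma_add_one (by norm_num)]
  rw [rhs, Nat.cast_zero, add_zero, add_zero, sub_zero, Real.rpow_one, hΓ]
  field_simp

theorem sum_term_eq_rhs (n : ℕ) : ∑ k ∈ range (n + 1), term n k = rhs n := by
  induction n with
  | zero => simp [term, rhs_zero]
  | succ n ih => rw [sum_term_succ, ih, rhs_succ]

end StrangeIdentityK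

theorem strange_identity_K (n : ℕ) :
    ∑ k ∈ Finset.range (n + 1),
      ((3 * n + k + 3 : ℝ)) *
        ((ascPochhammer ℝ k).eval (-(n : ℝ)) * (ascPochhammer ℝ k).eval (-1 / 3 - (n : ℝ))) /
        ((ascPochhammer ℝ k).eval 1 * (ascPochhammer ℝ k).eval (-(3 * n : ℝ) - 1)) *
        (9 / 8 : ℝ) ^ k
      = 3 * (2 : ℝ) ^ ((1 : ℝ) - (n : ℝ)) *
          (Real.Gamma (2 / 3) * Real.Gamma (3 / 2 + n) /
            (Real.Gamma (1 / 2) * Real.Gamma (2 / 3 + n))) :=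
  StrangeIdentityK.sum_term_eq_rhs n
end

section
/- For every nonnegative integer n and every complex number t: ∑_{k=0}^{n} (−n)_k/(1)_k · t^k · H_k = (1−t)^n·H_n − ∑_{k=1}^{n} (1−t)^{n−k}/k, where H_k = ∑_{j=1}^{k} 1/j is the k-th harmonic number and (x)_k is the Pochhammer symbol (note (−n)_k/(1)_k = (−1)^k·C(n,k)). -/
/-!
Write `B_n(a, x) = ∑_k C(n,k) x^k a_k`. Pascal's rule gives
`B_{n+1}(a, x) = (1 + x) B_n(a, x) + x B_n(Δa, x)`, and for the harmonic numbers `ΔH_k = 1/(k+1)`,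
whose transform is `x B_n(1/(k+1), x) = ((1 + x)^{n+1} - 1)/(n+1)` by the absorption identity
`(n+1) C(n,k) = (k+1) C(n+1,k+1)`. The right-hand side satisfies the same first-order
recurrence in `n`, so the identity follows by induction; at `x = -t` the Pochhammer quotient is
`(-1)^k C(n,k)`.
-/

open Finset

theorem sum_range_succ_choose_mul {R : Type*} [Semiring R] (n : ℕ) (f : ℕ → R) :
    ∑ k ∈ range (n + 2), ((n + 1).choose k : R) * f k
      = ∑ k ∈ range (n + 1), (n.choose k : R) * (f k + f (k + 1)) := by
  have hshift : ∑ k ∈ range (n + 1), (n.choose (k + 1) : R) * f (k + 1) + f 0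
      = ∑ k ∈ range (n + 1), (n.choose k : R) * f k := by
    rw [sum_range_succ, Nat.choose_succ_self, Nat.cast_zero, zero_mul, add_zero,
      sum_range_succ' (fun k => (n.choose k : R) * f k), Nat.choose_zero_right, Nat.cast_one,
      one_mul]
  rw [sum_range_succ']
  simp only [Nat.choose_succ_succ, Nat.cast_add, add_mul, mul_add, sum_add_distrib,
    Nat.choose_zero_right, Nat.cast_one, one_mul]
  rw [← hshift]
  abel

section BinomialSum

variable {R : Type*} [CommSemiring R]

def binomialSum (a : ℕ → R) (x : R) (n : ℕ) : R :=
  ∑ k ∈ range (n + 1), (n.choose k : R) * x ^ k * a k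

theorem binomialSum_one (x : R) (n : ℕ) : binomialSum (fun _ => 1) x n = (1 + x) ^ n := by
  rw [binomialSum, add_comm 1 x, add_pow]
  refine sum_congr rfl fun k _ => ?_
  ring

end BinomialSum

theorem binomialSum_succ {R : Type*} [CommRing R] (a : ℕ → R) (x : R) (n : ℕ) :
    binomialSum a x (n + 1)
      = (1 + x) * binomialSum a x n + x * binomialSum (fun k => a (k + 1) - a k) x n := by
  simp only [binomialSum, mul_sum, ← sum_add_distrib, mul_assoc]
  rw [sum_range_succ_choose_mul]
  refine sum_congr rfl fun k _ => ?_
  ring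

theorem sum_Icc_pow_sub_div_succ {K : Type*} [DivisionRing K] (y : K) (n : ℕ) :
    ∑ k ∈ Icc 1 (n + 1), y ^ (n + 1 - k) / (k : K)
      = y * ∑ k ∈ Icc 1 n, y ^ (n - k) / (k : K) + 1 / ((n : K) + 1) := by
  rw [sum_Icc_succ_top (by omega), mul_sum, Nat.sub_self, pow_zero, Nat.cast_add_one]
  congr 1
  refine sum_congr rfl fun k hk => ?_
  rw [Nat.sub_add_comm (mem_Icc.mp hk).2, pow_succ', mul_div_assoc]

section Harmonic

variable {K : Type*} [Field K] [CharZero K]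

theorem mul_binomialSum_inv_add_one (x : K) (n : ℕ) :
    x * binomialSum (fun k => 1 / ((k : K) + 1)) x n
      = ((1 + x) ^ (n + 1) - 1) / ((n : K) + 1) := by
  have habsorb : ∀ k,
      ((n : K) + 1) * (n.choose k : K) / ((k : K) + 1) = (n + 1).choose (k + 1) := by
    intro k
    rw [div_eq_iff (Nat.cast_add_one_ne_zero k)]
    exact_mod_cast Nat.add_one_mul_choose_eq n k
  rw [eq_div_iff (Nat.cast_add_one_ne_zero n), mul_comm]
  simp only [← binomialSum_one, binomialSum]
  rw [sum_range_succ' _ (n + 1), mul_sum, mul_sum]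
  simp only [Nat.choose_zero_right, Nat.cast_one, pow_zero, mul_one, add_sub_cancel_right]
  refine sum_congr rfl fun k _ => ?_
  rw [← habsorb k, pow_succ]
  ring

theorem binomialSum_harmonic (x : K) (n : ℕ) :
    binomialSum (fun k => ∑ j ∈ range k, 1 / ((j : K) + 1)) x n
      = (1 + x) ^ n * (∑ j ∈ range n, 1 / ((j : K) + 1))
          - ∑ k ∈ Icc 1 n, (1 + x) ^ (n - k) / (k : K) := by
  induction n with
  | zero => simp [binomialSum]
  | succ n ih =>
    have hdiff : (fun k : ℕ =>
        ∑ j ∈ range (k + 1), 1 / ((j : K) + 1) - ∑ j ∈ range k, 1 / ((j : K) + 1))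
          = fun k : ℕ => 1 / ((k : K) + 1) := by
      funext k
      rw [sum_range_succ, add_sub_cancel_left]
    rw [binomialSum_succ, hdiff, ih, sum_Icc_pow_sub_div_succ, sum_range_succ,
      mul_binomialSum_inv_add_one]
    field_simp
    ring

end Harmonic

theorem ascPochhammer_eval_neg_div_eval_one {K : Type*} [Field K] [CharZero K] (n k : ℕ) :
    (ascPochhammer K k).eval (-(n : K)) / (ascPochhammer K k).eval 1
      = (-1) ^ k * (n.choose k : K) := by
  have hk : (k.factorial : K) ≠ 0 := by exact_mod_cast Nat.factorial_ne_zero k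
  rw [ascPochhammer_eval_neg_eq_descPochhammer, descPochhammer_eval_eq_descFactorial,
    ascPochhammer_eval_one, Nat.descFactorial_eq_factorial_mul_choose]
  push_cast
  field_simp

theorem harmonic_binomial_identity (n : ℕ) (t : ℂ) :
    ∑ k ∈ Finset.range (n + 1),
      (ascPochhammer ℂ k).eval (-(n : ℂ)) / (ascPochhammer ℂ k).eval 1 * t ^ k *
        (∑ j ∈ Finset.range k, 1 / ((j : ℂ) + 1))
      = (1 - t) ^ n * (∑ j ∈ Finset.range n, 1 / ((j : ℂ) + 1))
          - ∑ k ∈ Finset.Icc 1 n, (1 - t) ^ (n - k) / (k : ℂ) := by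
  rw [sub_eq_add_neg 1 t, ← binomialSum_harmonic]
  refine sum_congr rfl fun k _ => ?_
  rw [ascPochhammer_eval_neg_div_eval_one, neg_pow]
  ring
end

section
/- For any prime p > 3: ∑_{k=0}^{p−1} (1/3)_k/k! · 2^k − ∑_{k=0}^{p−1} (2/3)_k/k! · 2^k ≡ 2^p − 2 (mod p²), where (x)_k is the Pochhammer symbol and the sums are taken in ℤ_p. -/
/-!
Let `F(x) = ∑_{k<p} (x)_k 2^k / k!`, a polynomial of degree `< p` over `ℤ_p`. For `0 ≤ m < p`
the sum at `x = -m` is the full binomial expansion of `(1 - 2)^m`, so `F(-m) = (-1)^m`. Since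
`1 + m ≡ -(p - 1 - m)` and `p - 1` is even, `F(x) - F(1 - x)` vanishes at every residue mod `p`;
hence its coefficients are divisible by `p`, and its value mod `p²` only depends on `x` mod `p`.
So `1/3` may be replaced by an integer `n + 1 ≡ 1/3`, where
`F(n + 1) = S_n := ∑_{k<p} C(n+k, k) 2^k`. Pascal's rule gives
`S_{n+1} + S_n = 2^p C(n+p, n+1) ≡ 2p/(n+1) (mod p²)`, hence `S_n ≡ (-1)^n (2^p - 1 - 2p A_n)`
with `A_n = ∑_{i≤n} (-1)^{i-1}/i`; also `2^p - 2 = ∑_{0<i<p} C(p, i) ≡ p A_{p-1}`. What is left is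
a congruence mod `p` between alternating harmonic sums. It follows from `H_j ≡ H_{p-1-j}` and
`A_n = H_n - H_{⌊n/2⌋}`: when `n + 1 ≡ 1/3`, one of `A_n`, `A_{p-1-n}` is an `A_m` with
`m + ⌊m/2⌋ = p - 1`, which vanishes.
-/

open Finset Polynomial
open scoped Nat

section CommRing

variable {R : Type*} [CommRing R]

theorem Polynomial.sq_dvd_eval_sub_eval {a x y : R} {f : R[X]} (hf : ∀ i, a ∣ f.coeff i)
    (hxy : a ∣ x - y) : a ^ 2 ∣ f.eval x - f.eval y := by
  rw [eval_eq_sum_range, eval_eq_sum_range, ← sum_sub_distrib]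
  refine dvd_sum fun i _ ↦ ?_
  rw [← mul_sub, sq]
  exact mul_dvd_mul (hf i) (hxy.trans (sub_dvd_pow_sub_pow x y i))

theorem sq_dvd_sub_mul_ringInverse {a u z w x : R} (hu : IsUnit u) (hx : x * u = a * z)
    (hzw : a ∣ z - w) : a ^ 2 ∣ x - a * w * Ring.inverse u := by
  have hx' : x = a * z * Ring.inverse u := by
    rw [← hx, mul_assoc, Ring.mul_inverse_cancel u hu, mul_one]
  rw [hx', ← sub_mul, ← mul_sub, sq, mul_assoc]
  exact mul_dvd_mul_left a (dvd_mul_of_dvd_left hzw _)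

theorem sum_range_ascPochhammer_eval_neg_natCast_mul_pow {m P : ℕ} (hm : m < P) (b : ℕ → R)
    (hb : ∀ k ≤ m, (k ! : R) * b k = 1) (c : R) :
    ∑ k ∈ range P, (ascPochhammer R k).eval (-(m : R)) * b k * c ^ k = (1 - c) ^ m := by
  have htail : ∑ k ∈ Ico (m + 1) P, (ascPochhammer R k).eval (-(m : R)) * b k * c ^ k = 0 :=
    sum_eq_zero fun k hk ↦ by
      rw [ascPochhammer_eval_neg_coe_nat_of_lt (mem_Ico.1 hk).1, zero_mul, zero_mul]
  rw [← sum_range_add_sum_Ico _ hm, htail, add_zero, sub_eq_neg_add, add_pow]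
  refine sum_congr rfl fun k hk ↦ ?_
  rw [ascPochhammer_eval_neg_eq_descPochhammer, descPochhammer_eval_eq_descFactorial,
    Nat.descFactorial_eq_factorial_mul_choose, one_pow, mul_one, neg_pow, Nat.cast_mul]
  linear_combination ((-1) ^ k * c ^ k * m.choose k : R) * hb k (Nat.lt_succ_iff.1 (mem_range.1 hk))

end CommRing

theorem Nat.sum_range_choose_mul_two_pow_succ_add (n K : ℕ) :
    ∑ k ∈ range K, (n + 1 + k).choose k * 2 ^ k + ∑ k ∈ range K, (n + k).choose k * 2 ^ k
      = 2 ^ K * (n + K).choose (n + 1) := by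
  induction K with
  | zero => simp
  | succ K ih =>
    have h1 : (n + 1 + K).choose K = (n + K + 1).choose (n + 1) := by
      rw [← Nat.choose_symm_add, add_right_comm]
    have h2 : (n + K).choose K = (n + K).choose n := Nat.choose_symm_add.symm
    have hpascal := Nat.choose_succ_succ' (n + K) n
    rw [sum_range_succ, sum_range_succ, h1, h2, ← add_assoc n K 1, hpascal]
    linear_combination ih

/-- `∑_{i=1}^n 1/i`; `Ring.inverse` sends non-units to `0`. -/
noncomputable def harmonicSum (R : Type*) [Semiring R] (n : ℕ) : R :=
  ∑ i ∈ range n, Ring.inverse ((i : R) + 1)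

/-- `∑_{i=1}^n (-1)^(i-1)/i`; `Ring.inverse` sends non-units to `0`. -/
noncomputable def altHarmonicSum (R : Type*) [Ring R] (n : ℕ) : R :=
  ∑ i ∈ range n, (-1) ^ i * Ring.inverse ((i : R) + 1)

theorem altHarmonicSum_succ {R : Type*} [Ring R] (n : ℕ) :
    altHarmonicSum R (n + 1) = altHarmonicSum R n + (-1) ^ n * Ring.inverse ((n : R) + 1) :=
  sum_range_succ _ n

section Field

variable {K : Type*} [Field K]

theorem altHarmonicSum_two_mul (h2 : (2 : K) ≠ 0) (m : ℕ) :
    altHarmonicSum K (2 * m) = harmonicSum K (2 * m) - harmonicSum K m := by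
  induction m with
  | zero => simp [altHarmonicSum, harmonicSum]
  | succ m ih =>
    have hhalf : ((2 * m + 1 : ℕ) + 1 : K)⁻¹ = 2⁻¹ * ((m : K) + 1)⁻¹ := by
      rw [← mul_inv]; push_cast; ring_nf
    simp only [altHarmonicSum, harmonicSum, Ring.inverse_eq_inv'] at ih ⊢
    rw [show 2 * (m + 1) = 2 * m + 1 + 1 by ring, sum_range_succ, sum_range_succ, sum_range_succ,
      sum_range_succ, sum_range_succ, ih, hhalf, pow_succ, (even_two_mul m).neg_one_pow]
    field_simp
    ring

theorem altHarmonicSum_eq_harmonicSum_sub (h2 : (2 : K) ≠ 0) (n : ℕ) :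
    altHarmonicSum K n = harmonicSum K n - harmonicSum K (n / 2) := by
  obtain ⟨m, rfl | rfl⟩ := Nat.even_or_odd' n
  · rw [altHarmonicSum_two_mul h2, Nat.mul_div_cancel_left m two_pos]
  · rw [altHarmonicSum_succ, harmonicSum, sum_range_succ, ← harmonicSum,
      altHarmonicSum_two_mul h2, (even_two_mul m).neg_one_pow,
      show (2 * m + 1) / 2 = m by omega]
    ring

end Field

namespace ZMod

variable {p : ℕ} [Fact p.Prime]

theorem neg_one_pow_eq_of_add_eq {a b : ℕ} (h : a + b = p - 1) :
    (-1 : ZMod p) ^ a = (-1) ^ b := by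
  have hfermat : (-1 : ZMod p) ^ (a + b) = 1 := h ▸ pow_card_sub_one_eq_one (by simp)
  have hsq : (-1 : ZMod p) ^ b * (-1) ^ b = 1 := by rw [← mul_pow]; simp
  rw [pow_add] at hfermat
  linear_combination (-1 : ZMod p) ^ b * hfermat - (-1 : ZMod p) ^ a * hsq

theorem natCast_add_one_eq_neg {a b : ℕ} (h : a + b + 2 = p) :
    (a : ZMod p) + 1 = -((b : ZMod p) + 1) := by
  have hsum : ((a + 1 + (b + 1) : ℕ) : ZMod p) = 0 := by
    rw [show a + 1 + (b + 1) = p by omega, natCast_self]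
  push_cast at hsum
  linear_combination hsum

theorem harmonicSum_add_of_add_add_one_eq {j m : ℕ} (h : j + m + 1 = p) :
    harmonicSum (ZMod p) (j + m) = harmonicSum (ZMod p) j - harmonicSum (ZMod p) m := by
  have htail : ∑ k ∈ range m, (((j + k : ℕ) : ZMod p) + 1)⁻¹
      = -∑ k ∈ range m, ((k : ZMod p) + 1)⁻¹ := by
    rw [← sum_range_reflect, ← sum_neg_distrib]
    refine sum_congr rfl fun k hk ↦ ?_
    rw [mem_range] at hk
    rw [natCast_add_one_eq_neg (by omega : j + (m - 1 - k) + k + 2 = p), inv_neg]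
  simp only [harmonicSum, Ring.inverse_eq_inv', sum_range_add, htail, sub_eq_add_neg]

theorem altHarmonicSum_add_of_add_add_one_eq {j m : ℕ} (h : j + m + 1 = p) :
    altHarmonicSum (ZMod p) (j + m) = altHarmonicSum (ZMod p) j + altHarmonicSum (ZMod p) m := by
  have htail : ∑ k ∈ range m, (-1) ^ (j + k) * (((j + k : ℕ) : ZMod p) + 1)⁻¹
      = ∑ k ∈ range m, (-1) ^ k * ((k : ZMod p) + 1)⁻¹ := by
    rw [← sum_range_reflect]
    refine sum_congr rfl fun k hk ↦ ?_
    rw [mem_range] at hk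
    rw [natCast_add_one_eq_neg (by omega : j + (m - 1 - k) + k + 2 = p), inv_neg,
      neg_one_pow_eq_of_add_eq (by omega : j + (m - 1 - k) + (k + 1) = p - 1), pow_succ]
    ring
  simp only [altHarmonicSum, Ring.inverse_eq_inv', sum_range_add, htail]

theorem harmonicSum_eq_of_add_add_one_eq (hp : p ≠ 2) {j m : ℕ} (h : j + m + 1 = p) :
    harmonicSum (ZMod p) j = harmonicSum (ZMod p) m := by
  have h2 : (2 : ZMod p) ≠ 0 := Ring.two_ne_zero (by rwa [ringChar_zmod_n])
  have hp1 : 1 ≤ p := (Fact.out : p.Prime).one_le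
  have hfull : harmonicSum (ZMod p) (p - 1) = 0 := by
    have := harmonicSum_add_of_add_add_one_eq (p := p) (j := 0) (m := p - 1) (by omega)
    rw [zero_add, show harmonicSum (ZMod p) 0 = 0 from sum_range_zero _, zero_sub,
      eq_neg_iff_add_eq_zero, ← two_mul] at this
    exact (mul_eq_zero.1 this).resolve_left h2
  have := harmonicSum_add_of_add_add_one_eq h
  rw [show j + m = p - 1 by omega, hfull] at this
  linear_combination -this

theorem altHarmonicSum_eq_zero (hp : p ≠ 2) {m : ℕ} (h : m + m / 2 + 1 = p) :
    altHarmonicSum (ZMod p) m = 0 := by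
  rw [altHarmonicSum_eq_harmonicSum_sub (Ring.two_ne_zero (by rwa [ringChar_zmod_n])),
    harmonicSum_eq_of_add_add_one_eq hp h, sub_self]

theorem neg_one_pow_mul_altHarmonicSum_sub (hp : p ≠ 2) {n : ℕ} (hn : n < p)
    (h3 : (3 : ZMod p) * (n + 1) = 1) :
    (-1) ^ n * (altHarmonicSum (ZMod p) (p - 1) - 2 * altHarmonicSum (ZMod p) n)
      = altHarmonicSum (ZMod p) (p - 1) := by
  have hodd : p % 2 = 1 := (Fact.out : p.Prime).eq_two_or_odd.resolve_left hp
  have hmod : 3 * (n + 1) % p = 1 := by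
    have h3' : ((3 * (n + 1) : ℕ) : ZMod p) = ((1 : ℕ) : ZMod p) := by push_cast; exact h3
    rwa [natCast_eq_natCast_iff', Nat.mod_eq_of_lt (Fact.out : p.Prime).one_lt] at h3'
  have hdiv := Nat.div_add_mod (3 * (n + 1)) p
  have hq : 3 * (n + 1) / p ≤ 3 := Nat.div_le_of_le_mul (by omega)
  rw [hmod] at hdiv
  -- `3(n + 1) = cp + 1`: for `c = 1`, `n` is odd and `A_{2n+1} = 0`; for `c = 2`, `n` is even and
  -- `A_n = 0`.
  interval_cases hc : 3 * (n + 1) / p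
  · omega
  · rw [show p - 1 = n + (2 * n + 1) by omega, altHarmonicSum_add_of_add_add_one_eq (by omega),
      altHarmonicSum_eq_zero hp (m := 2 * n + 1) (by omega),
      (Nat.odd_iff.2 (by omega) : Odd n).neg_one_pow]
    ring
  · rw [altHarmonicSum_eq_zero hp (m := n) (by omega),
      (Nat.even_iff.2 (by omega) : Even n).neg_one_pow]
    ring
  · omega

theorem natCast_choose_pred (k : ℕ) (hk : k < p) : ((p - 1).choose k : ZMod p) = (-1) ^ k := by
  induction k with
  | zero => simp
  | succ k ih =>
    have hpascal := Nat.choose_succ_succ' (p - 1) k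
    rw [Nat.sub_add_cancel (Fact.out : p.Prime).one_le] at hpascal
    have hdvd : ((p.choose (k + 1) : ℕ) : ZMod p) = 0 :=
      (natCast_eq_zero_iff _ _).2 ((Fact.out : p.Prime).dvd_choose_self k.succ_ne_zero hk)
    rw [hpascal, Nat.cast_add, ih (by omega)] at hdvd
    linear_combination hdvd

theorem natCast_choose_add_left (j : ℕ) (hj : j < p) : ((j + p).choose j : ZMod p) = 1 := by
  have hlucas := (Choose.choose_modEq_choose_mod_mul_choose_div_nat (n := j + p) (k := j) (p := p))
  rw [Nat.add_mod_right, Nat.mod_eq_of_lt hj, Nat.add_div_right _ (Fact.out : p.Prime).pos,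
    Nat.div_eq_of_lt hj, Nat.choose_self, Nat.choose_zero_right, mul_one] at hlucas
  exact_mod_cast (natCast_eq_natCast_iff _ _ _).2 hlucas

end ZMod

namespace PadicInt

variable {p : ℕ} [Fact p.Prime]

theorem p_dvd_iff_toZMod_eq_zero {x : ℤ_[p]} : (p : ℤ_[p]) ∣ x ↔ toZMod x = 0 := by
  rw [← Ideal.mem_span_singleton, ← maximalIdeal_eq_span_p, ← ker_toZMod, RingHom.mem_ker]

theorem isUnit_iff_toZMod_ne_zero {x : ℤ_[p]} : IsUnit x ↔ toZMod x ≠ 0 := by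
  rw [← IsLocalRing.notMem_maximalIdeal, ← ker_toZMod, RingHom.mem_ker]

theorem isUnit_natCast_iff {m : ℕ} : IsUnit (m : ℤ_[p]) ↔ ¬p ∣ m := by
  rw [isUnit_iff_toZMod_ne_zero, map_natCast, Ne, ZMod.natCast_eq_zero_iff]

theorem toZMod_ringInverse (x : ℤ_[p]) : toZMod (Ring.inverse x) = (toZMod x)⁻¹ := by
  by_cases hx : IsUnit x
  · refine eq_inv_of_mul_eq_one_left ?_
    rw [← map_mul, Ring.inverse_mul_cancel _ hx, map_one]
  · rw [Ring.inverse_non_unit _ hx, map_zero,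
      not_not.1 (mt isUnit_iff_toZMod_ne_zero.2 hx), inv_zero]

theorem toZMod_altHarmonicSum (n : ℕ) :
    toZMod (altHarmonicSum ℤ_[p] n) = altHarmonicSum (ZMod p) n := by
  simp [altHarmonicSum, toZMod_ringInverse, Ring.inverse_eq_inv']

theorem p_dvd_pow_card_sub_self (x : ℤ_[p]) : (p : ℤ_[p]) ∣ x ^ p - x := by
  rw [p_dvd_iff_toZMod_eq_zero, map_sub, map_pow, ZMod.pow_card, sub_self]

theorem isUnit_natCast_add_one {k : ℕ} (hk : k + 1 < p) : IsUnit ((k : ℤ_[p]) + 1) := by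
  exact_mod_cast isUnit_natCast_iff.2 (Nat.not_dvd_of_pos_of_lt k.succ_pos hk)

theorem isUnit_factorial {k : ℕ} (hk : k < p) : IsUnit (k ! : ℤ_[p]) :=
  isUnit_natCast_iff.2 (mt (Fact.out : p.Prime).dvd_factorial.1 (by omega))

theorem sq_dvd_choose_succ_sub {k : ℕ} (hk : k + 1 < p) :
    (p : ℤ_[p]) ^ 2 ∣
      (p.choose (k + 1) : ℤ_[p]) - p * (-1) ^ k * Ring.inverse ((k : ℤ_[p]) + 1) := by
  have hmul : (p.choose (k + 1) : ℤ_[p]) * ((k : ℤ_[p]) + 1) = p * (p - 1).choose k := by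
    have := Nat.add_one_mul_choose_eq (p - 1) k
    rw [Nat.sub_add_cancel (Fact.out : p.Prime).one_le] at this
    exact_mod_cast this.symm
  have hmod : (p : ℤ_[p]) ∣ ((p - 1).choose k : ℤ_[p]) - (-1) ^ k := by
    rw [p_dvd_iff_toZMod_eq_zero, map_sub, map_natCast, ZMod.natCast_choose_pred k (by omega),
      map_pow, map_neg, map_one, sub_self]
  exact sq_dvd_sub_mul_ringInverse (isUnit_natCast_add_one hk) hmul hmod

theorem sq_dvd_choose_add_succ_sub {j : ℕ} (hj : j + 1 < p) :
    (p : ℤ_[p]) ^ 2 ∣ ((j + p).choose (j + 1) : ℤ_[p]) - p * Ring.inverse ((j : ℤ_[p]) + 1) := by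
  have hmul : ((j + p).choose (j + 1) : ℤ_[p]) * ((j : ℤ_[p]) + 1) = p * (j + p).choose j := by
    have := Nat.choose_succ_right_eq (j + p) j
    rw [Nat.add_sub_cancel_left] at this
    exact_mod_cast this.trans (mul_comm _ _)
  have hmod : (p : ℤ_[p]) ∣ ((j + p).choose j : ℤ_[p]) - 1 := by
    rw [p_dvd_iff_toZMod_eq_zero, map_sub, map_natCast, ZMod.natCast_choose_add_left j (by omega),
      map_one, sub_self]
  simpa using sq_dvd_sub_mul_ringInverse (isUnit_natCast_add_one hj) hmul hmod

theorem sq_dvd_two_pow_mul_choose_add_sub {j : ℕ} (hj : j + 1 < p) :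
    (p : ℤ_[p]) ^ 2 ∣
      2 ^ p * ((j + p).choose (j + 1) : ℤ_[p]) - 2 * p * Ring.inverse ((j : ℤ_[p]) + 1) := by
  have hC := sq_dvd_choose_add_succ_sub hj
  have hpC : (p : ℤ_[p]) ∣ ((j + p).choose (j + 1) : ℤ_[p]) := by
    simpa using dvd_add ((dvd_pow_self (p : ℤ_[p]) two_ne_zero).trans hC)
      (dvd_mul_right (p : ℤ_[p]) (Ring.inverse ((j : ℤ_[p]) + 1)))
  rw [show 2 ^ p * ((j + p).choose (j + 1) : ℤ_[p]) - 2 * p * Ring.inverse ((j : ℤ_[p]) + 1)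
      = 2 * (((j + p).choose (j + 1) : ℤ_[p]) - p * Ring.inverse ((j : ℤ_[p]) + 1))
        + (2 ^ p - 2) * ((j + p).choose (j + 1) : ℤ_[p]) by ring]
  exact dvd_add (dvd_mul_of_dvd_right hC 2)
    (sq (p : ℤ_[p]) ▸ mul_dvd_mul (p_dvd_pow_card_sub_self 2) hpC)

theorem sq_dvd_two_pow_sub_two_sub_mul_altHarmonicSum :
    (p : ℤ_[p]) ^ 2 ∣ 2 ^ p - 2 - p * altHarmonicSum ℤ_[p] (p - 1) := by
  have hbinom : ∑ k ∈ range (p - 1), p.choose (k + 1) + 2 = 2 ^ p := by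
    obtain ⟨q, hq⟩ : ∃ q, p = q + 1 := ⟨p - 1, by have := (Fact.out : p.Prime).one_le; omega⟩
    have := Nat.sum_range_choose p
    rw [sum_range_succ, Nat.choose_self, hq, sum_range_succ', Nat.choose_zero_right] at this
    rw [hq, Nat.add_sub_cancel, ← this]
  have hbinom' : (2 : ℤ_[p]) ^ p - 2 = ∑ k ∈ range (p - 1), (p.choose (k + 1) : ℤ_[p]) := by
    have := congrArg (Nat.cast : ℕ → ℤ_[p]) hbinom
    push_cast at this
    linear_combination -this
  rw [hbinom', altHarmonicSum, mul_sum, ← sum_sub_distrib]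
  refine dvd_sum fun k hk ↦ ?_
  rw [← mul_assoc]
  exact sq_dvd_choose_succ_sub (by rw [mem_range] at hk; omega)

theorem sq_dvd_sum_choose_mul_two_pow_sub {j : ℕ} (hj : j < p) :
    (p : ℤ_[p]) ^ 2 ∣ ∑ k ∈ range p, ((j + k).choose k : ℤ_[p]) * 2 ^ k
      - (-1) ^ j * (2 ^ p - 1 - 2 * p * altHarmonicSum ℤ_[p] j) := by
  induction j with
  | zero =>
    have hgeom := geom_sum_mul (2 : ℤ_[p]) p
    simp only [zero_add, Nat.choose_self, Nat.cast_one, one_mul, pow_zero, altHarmonicSum,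
      range_zero, sum_empty, mul_zero, sub_zero]
    norm_num at hgeom
    rw [hgeom, sub_self]
    exact dvd_zero _
  | succ j ih =>
    have hrec := congrArg (Nat.cast : ℕ → ℤ_[p]) (Nat.sum_range_choose_mul_two_pow_succ_add j p)
    push_cast at hrec
    have hsign : ((-1 : ℤ_[p]) ^ j) * (-1) ^ j = 1 := by rw [← mul_pow]; simp
    have hsplit : ∑ k ∈ range p, ((j + 1 + k).choose k : ℤ_[p]) * 2 ^ k
        - (-1) ^ (j + 1) * (2 ^ p - 1 - 2 * p * altHarmonicSum ℤ_[p] (j + 1))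
        = (2 ^ p * ((j + p).choose (j + 1) : ℤ_[p]) - 2 * p * Ring.inverse ((j : ℤ_[p]) + 1))
          - (∑ k ∈ range p, ((j + k).choose k : ℤ_[p]) * 2 ^ k
            - (-1) ^ j * (2 ^ p - 1 - 2 * p * altHarmonicSum ℤ_[p] j)) := by
      rw [altHarmonicSum_succ, pow_succ]
      linear_combination hrec - 2 * p * Ring.inverse ((j : ℤ_[p]) + 1) * hsign
    rw [hsplit]
    exact dvd_sub (sq_dvd_two_pow_mul_choose_add_sub hj) (ih (by omega))

end PadicInt

/-- The truncated hypergeometric series `₁F₀(x; ; 2)_{p-1} = ∑_{k<p} (x)_k 2^k / k!`. -/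
noncomputable def truncOneFZero (p : ℕ) [Fact p.Prime] : ℤ_[p][X] :=
  ∑ k ∈ range p, C (Ring.inverse (k ! : ℤ_[p]) * 2 ^ k) * ascPochhammer ℤ_[p] k

section truncOneFZero

open PadicInt

variable {p : ℕ} [Fact p.Prime]

theorem truncOneFZero_eval (x : ℤ_[p]) :
    (truncOneFZero p).eval x
      = ∑ k ∈ range p, (ascPochhammer ℤ_[p] k).eval x * Ring.inverse (k ! : ℤ_[p]) * 2 ^ k := by
  simp only [truncOneFZero, eval_finsetSum, eval_mul, eval_C]
  exact sum_congr rfl fun k _ ↦ by ring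

theorem truncOneFZero_natDegree_lt : (truncOneFZero p).natDegree < p := by
  have hp1 := (Fact.out : p.Prime).one_le
  refine lt_of_le_of_lt (natDegree_sum_le_of_forall_le _ _ (n := p - 1) fun k hk ↦ ?_) (by omega)
  refine (natDegree_C_mul_le _ _).trans ?_
  rw [ascPochhammer_natDegree]
  rw [mem_range] at hk
  omega

theorem truncOneFZero_eval_neg_natCast {m : ℕ} (hm : m < p) :
    (truncOneFZero p).eval (-(m : ℤ_[p])) = (-1) ^ m := by
  rw [truncOneFZero_eval, sum_range_ascPochhammer_eval_neg_natCast_mul_pow hm _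
    (fun k hk ↦ Ring.mul_inverse_cancel _ (isUnit_factorial (by omega))) 2]
  norm_num

theorem truncOneFZero_eval_natCast_add_one (n : ℕ) :
    (truncOneFZero p).eval ((n : ℤ_[p]) + 1)
      = ∑ k ∈ range p, ((n + k).choose k : ℤ_[p]) * 2 ^ k := by
  rw [truncOneFZero_eval]
  refine sum_congr rfl fun k hk ↦ ?_
  rw [← Nat.cast_succ, ← ascPochhammer_eval_cast, ascPochhammer_nat_eq_ascFactorial,
    Nat.ascFactorial_eq_factorial_mul_choose, Nat.cast_mul]
  linear_combination ((n + k).choose k * 2 ^ k : ℤ_[p]) *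
    Ring.mul_inverse_cancel _ (isUnit_factorial (p := p) (mem_range.1 hk))

theorem map_truncOneFZero_sub_comp_eq_zero :
    (truncOneFZero p - (truncOneFZero p).comp (1 - X)).map toZMod = 0 := by
  refine eq_zero_of_natDegree_lt_card_of_eval_eq_zero' _ univ (fun t _ ↦ ?_) ?_
  · obtain ⟨m, hm, htm⟩ : ∃ m < p, (m : ZMod p) = -t := ⟨(-t).val, ZMod.val_lt _, by simp⟩
    have ht : t = toZMod (-(m : ℤ_[p])) := by rw [map_neg, map_natCast, htm, neg_neg]
    have ht' : 1 - t = toZMod (-((p - 1 - m : ℕ) : ℤ_[p])) := by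
      rw [map_neg, map_natCast, Nat.cast_sub (by omega), Nat.cast_sub (Fact.out : p.Prime).one_le,
        ZMod.natCast_self, htm]
      ring
    rw [Polynomial.map_sub, Polynomial.map_comp, eval_sub, eval_comp, Polynomial.map_sub,
      Polynomial.map_one, map_X, eval_sub, eval_one, eval_X, ht', ht, eval_map_apply,
      eval_map_apply, truncOneFZero_eval_neg_natCast hm, truncOneFZero_eval_neg_natCast (by omega),
      map_pow, map_pow, map_neg, map_one,
      ZMod.neg_one_pow_eq_of_add_eq (by omega : m + (p - 1 - m) = p - 1), sub_self]
  · rw [card_univ, ZMod.card]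
    refine natDegree_map_le.trans_lt
      ((natDegree_sub_le _ _).trans_lt (max_lt truncOneFZero_natDegree_lt ?_))
    refine natDegree_comp_le.trans_lt ?_
    have h1X : (1 - X : ℤ_[p][X]).natDegree ≤ 1 := by compute_degree
    nlinarith [truncOneFZero_natDegree_lt (p := p)]

theorem sq_dvd_truncOneFZero_reflect_sub {x y : ℤ_[p]} (hxy : (p : ℤ_[p]) ∣ x - y) :
    (p : ℤ_[p]) ^ 2 ∣ ((truncOneFZero p).eval x - (truncOneFZero p).eval (1 - x))
      - ((truncOneFZero p).eval y - (truncOneFZero p).eval (1 - y)) := by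
  have hcoeff (i : ℕ) :
      (p : ℤ_[p]) ∣ (truncOneFZero p - (truncOneFZero p).comp (1 - X)).coeff i := by
    rw [p_dvd_iff_toZMod_eq_zero, ← coeff_map, map_truncOneFZero_sub_comp_eq_zero, coeff_zero]
  simpa [eval_comp] using sq_dvd_eval_sub_eval hcoeff hxy

theorem sq_dvd_truncOneFZero_natCast_add_one_sub (hp : p ≠ 2) {n : ℕ} (hn : n < p)
    (h3 : (3 : ZMod p) * (n + 1) = 1) :
    (p : ℤ_[p]) ^ 2 ∣ (truncOneFZero p).eval ((n : ℤ_[p]) + 1)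
      - (truncOneFZero p).eval (1 - ((n : ℤ_[p]) + 1)) - (2 ^ p - 2) := by
  rw [show 1 - ((n : ℤ_[p]) + 1) = -n by ring, truncOneFZero_eval_natCast_add_one,
    truncOneFZero_eval_neg_natCast hn]
  have hharm : (p : ℤ_[p]) ∣
      (-1) ^ n * (altHarmonicSum ℤ_[p] (p - 1) - 2 * altHarmonicSum ℤ_[p] n)
        - altHarmonicSum ℤ_[p] (p - 1) := by
    simp only [p_dvd_iff_toZMod_eq_zero, map_sub, map_mul, map_pow, map_neg, map_one, map_ofNat,
      toZMod_altHarmonicSum, ZMod.neg_one_pow_mul_altHarmonicSum_sub hp hn h3, sub_self]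
  obtain ⟨b, hb⟩ := sq_dvd_sum_choose_mul_two_pow_sub hn
  obtain ⟨c, hc⟩ := sq_dvd_two_pow_sub_two_sub_mul_altHarmonicSum (p := p)
  obtain ⟨d, hd⟩ := hharm
  exact ⟨b + ((-1) ^ n - 1) * c + d, by linear_combination hb + ((-1) ^ n - 1) * hc + p * hd⟩

end truncOneFZero

theorem oneF_zero_third_diff (p : ℕ) [Fact p.Prime] (hp3 : 3 < p) :
    (p : ℤ_[p]) ^ 2 ∣
      (∑ k ∈ Finset.range p,
          (ascPochhammer ℤ_[p] k).eval (Ring.inverse (3 : ℤ_[p])) *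
            Ring.inverse ((k.factorial : ℤ_[p])) * 2 ^ k)
        - (∑ k ∈ Finset.range p,
            (ascPochhammer ℤ_[p] k).eval (2 * Ring.inverse (3 : ℤ_[p])) *
              Ring.inverse ((k.factorial : ℤ_[p])) * 2 ^ k)
        - (2 ^ p - 2) := by
  have h3 : (3 : ZMod p) ≠ 0 := by
    rw [← Nat.cast_ofNat, Ne, ZMod.natCast_eq_zero_iff]
    exact fun h ↦ by have := Nat.le_of_dvd (by norm_num) h; omega
  have hthird : 2 * Ring.inverse (3 : ℤ_[p]) = 1 - Ring.inverse 3 := by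
    linear_combination Ring.mul_inverse_cancel (3 : ℤ_[p])
      (PadicInt.isUnit_iff_toZMod_ne_zero.2 (by rwa [map_ofNat]))
  obtain ⟨n, hn, hn3⟩ : ∃ n < p, (3 : ZMod p) * (n + 1) = 1 :=
    ⟨((3 : ZMod p)⁻¹ - 1).val, ZMod.val_lt _,
      by rw [ZMod.natCast_zmod_val, sub_add_cancel, mul_inv_cancel₀ h3]⟩
  have hclose : (p : ℤ_[p]) ∣ Ring.inverse 3 - ((n : ℤ_[p]) + 1) := by
    rw [PadicInt.p_dvd_iff_toZMod_eq_zero, map_sub, PadicInt.toZMod_ringInverse, map_ofNat,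
      map_add, map_natCast, map_one, eq_inv_of_mul_eq_one_right hn3, sub_self]
  rw [hthird, ← truncOneFZero_eval, ← truncOneFZero_eval,
    ← sub_add_sub_cancel _ ((truncOneFZero p).eval ((n : ℤ_[p]) + 1)
      - (truncOneFZero p).eval (1 - ((n : ℤ_[p]) + 1)))]
  exact dvd_add (sq_dvd_truncOneFZero_reflect_sub hclose)
    (sq_dvd_truncOneFZero_natCast_add_one_sub (by omega) hn hn3)
end

section
/- For every nonnegative integer n: ∑_{k=0}^{n} (−n)_k(−1/2−n)_k/[(1)_k(−4n−2)_k] · (4/3)^k = (3/4)^{2n+1} · (2/3)_{2n+1}/(1/2)_{2n+1}. -/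
/-!
Both sides satisfy the first-order recurrence `2(4n+3)(4n+5) u(n+1) = (6n+5)(3n+4) u(n)` and agree
at `n = 0`. For the right-hand side this is the ratio of consecutive Pochhammer symbols. For the
sum `S(n) = ∑ₖ F(n,k)` it comes from Zeilberger's creative telescoping: with the certificate
`G(n,k+1) = F(n,k) p(n,k) / 2`, `p(n,k) = k² - (20n+23)k + 28n² + 50n + 20`, one has
`2(4n+3)(4n+5) F(n+1,k) - (6n+5)(3n+4) F(n,k) = G(n,k+1) - G(n,k)`, which reduces to a rational
identity once `F(n,k+1)` and `F(n+1,k+1)` are written as `F(n,k)` times their term ratios.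
Summing over `k` telescopes, since `G(n,0) = 0` and `G(n,n+2)` is a multiple of `F(n,n+1) = 0`.
-/

open Finset Polynomial

namespace StrangeEvaluation

noncomputable def summand (n k : ℕ) : ℚ :=
  (ascPochhammer ℚ k).eval (-(n : ℚ)) * (ascPochhammer ℚ k).eval (-1 / 2 - (n : ℚ)) /
      ((ascPochhammer ℚ k).eval 1 * (ascPochhammer ℚ k).eval (-(4 * n : ℚ) - 2)) *
    (4 / 3 : ℚ) ^ k

noncomputable def rhs (n : ℕ) : ℚ :=
  (3 / 4 : ℚ) ^ (2 * n + 1) *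
    ((ascPochhammer ℚ (2 * n + 1)).eval (2 / 3) / (ascPochhammer ℚ (2 * n + 1)).eval (1 / 2))

noncomputable def certificate (n : ℕ) : ℕ → ℚ
  | 0 => 0
  | k + 1 => summand n k * ((k : ℚ) ^ 2 - (20 * n + 23) * k + 28 * n ^ 2 + 50 * n + 20) / 2

lemma summand_zero (n : ℕ) : summand n 0 = 1 := by
  simp [summand]

lemma summand_succ (n k : ℕ) :
    summand n (k + 1) =
      summand n k * ((k - n) * (k - n - 1 / 2) / ((k + 1) * (k - 4 * n - 2)) * (4 / 3)) := by
  simp only [summand, ascPochhammer_succ_eval, pow_succ, div_eq_mul_inv, mul_inv]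
  ring

lemma summand_eq_zero_of_lt {n k : ℕ} (h : n < k) : summand n k = 0 := by
  simp [summand, ascPochhammer_eval_neg_coe_nat_of_lt h]

lemma summand_succ_succ {n k : ℕ} (hk : k ≤ n) :
    summand (n + 1) (k + 1) =
      summand n k * ((k - 4 * n - 5) * (k - 4 * n - 4) * (k - 4 * n - 3) /
        (12 * (k + 1) * (4 * n + 3) * (4 * n + 5))) := by
  induction k with
  | zero =>
    have h : -(4 * ((n : ℚ) + 1)) - 2 ≠ 0 := by linarith
    simp only [summand_succ, summand_zero, CharP.cast_eq_zero, Nat.cast_add, Nat.cast_one, zero_sub,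
      one_mul, zero_add]
    rw [div_mul_eq_mul_div, div_eq_div_iff h (by positivity)]
    ring
  | succ k ih =>
    have hkn : (k : ℚ) + 1 ≤ n := by exact_mod_cast hk
    have h1 : (k : ℚ) - 4 * n - 2 ≠ 0 := by intro h; linarith
    have h2 : (k : ℚ) + 1 - 4 * (n + 1) - 2 ≠ 0 := by intro h; linarith
    rw [summand_succ (n + 1), ih (by omega), summand_succ n k]
    push_cast
    field_simp
    ring

lemma summand_wz_relation {n k : ℕ} (hk : k ≤ n + 1) :
    2 * (4 * n + 3) * (4 * n + 5) * summand (n + 1) k - (6 * n + 5) * (3 * n + 4) * summand n k =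
      certificate n (k + 1) - certificate n k := by
  cases k with
  | zero =>
    simp only [certificate, summand_zero, CharP.cast_eq_zero]
    ring
  | succ j =>
    have hjn : (j : ℚ) ≤ n := by exact_mod_cast Nat.le_of_succ_le_succ hk
    have h1 : (j : ℚ) - 4 * n - 2 ≠ 0 := by intro h; linarith
    simp only [certificate]
    rw [summand_succ_succ (by omega), summand_succ n j]
    field_simp
    push_cast
    ring

lemma sum_summand_recurrence (n : ℕ) :
    2 * (4 * n + 3) * (4 * n + 5) * ∑ k ∈ range (n + 2), summand (n + 1) k =
      (6 * n + 5) * (3 * n + 4) * ∑ k ∈ range (n + 1), summand n k := by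
  have htele : ∑ k ∈ range (n + 2), (2 * (4 * n + 3) * (4 * n + 5) * summand (n + 1) k -
      (6 * n + 5) * (3 * n + 4) * summand n k) = certificate n (n + 2) - certificate n 0 := by
    rw [← sum_range_sub]
    exact sum_congr rfl fun k hk => summand_wz_relation (by have := mem_range.1 hk; omega)
  have hG : certificate n (n + 2) = 0 := by
    simp [certificate, summand_eq_zero_of_lt (Nat.lt_succ_self n)]
  rw [hG, certificate, sub_zero, sum_sub_distrib, ← mul_sum, ← mul_sum,
    sum_range_succ (summand n) (n + 1), summand_eq_zero_of_lt (Nat.lt_succ_self n), add_zero]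
    at htele
  exact sub_eq_zero.1 htele

lemma rhs_recurrence (n : ℕ) :
    2 * (4 * n + 3) * (4 * n + 5) * rhs (n + 1) = (6 * n + 5) * (3 * n + 4) * rhs n := by
  have hpos : 0 < (ascPochhammer ℚ (2 * n + 1)).eval (1 / 2) := ascPochhammer_pos _ _ (by norm_num)
  simp only [rhs, show 2 * (n + 1) + 1 = 2 * n + 1 + 1 + 1 by ring, ascPochhammer_succ_eval, pow_succ]
  field_simp
  push_cast
  ring

theorem sum_summand_eq_rhs (n : ℕ) : ∑ k ∈ range (n + 1), summand n k = rhs n := by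
  induction n with
  | zero => norm_num [summand, rhs]
  | succ n ih =>
    have hne : (2 * (4 * n + 3) * (4 * n + 5) : ℚ) ≠ 0 := by positivity
    refine mul_left_cancel₀ hne ?_
    rw [sum_summand_recurrence, ih, rhs_recurrence]

end StrangeEvaluation

theorem strange_identity_48b (n : ℕ) :
    ∑ k ∈ Finset.range (n + 1),
      (ascPochhammer ℚ k).eval (-(n : ℚ)) * (ascPochhammer ℚ k).eval (-1 / 2 - (n : ℚ)) /
        ((ascPochhammer ℚ k).eval 1 * (ascPochhammer ℚ k).eval (-(4 * n : ℚ) - 2)) *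
        (4 / 3 : ℚ) ^ k
      = (3 / 4 : ℚ) ^ (2 * n + 1) *
          ((ascPochhammer ℚ (2 * n + 1)).eval (2 / 3) /
            (ascPochhammer ℚ (2 * n + 1)).eval (1 / 2)) := by
  exact StrangeEvaluation.sum_summand_eq_rhs n
end
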